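/- Let n, n₁, n₂ be nonnegative integers with n₁ + n₂ > n. Then there exist real numbers ε > 0, r > 1 and C > 0, depending only on n, n₁ and n₂, such that the following holds: for all complex numbers a, a′, for every complex polynomial f of degree ≤ n and every z₀ ∈ ℂ with 0 ≤ Re z₀ < 1 and y₀ := Im z₀ > r, if |f^{(k)}(z₀) − δ_{k,0}·a| ≤ ε·A(f,z₀)/y₀^k for all 0 ≤ k < n₁, and |f̄^{(k)}(z₀) − δ_{k,0}·a′| ≤ ε·A(f,z₀)/y₀^k for all 0 ≤ k < n₂, then A(f,z₀) ≤ C·(|a| + |a′|). Here δ_{k,0} equals 1 if k = 0 and 0 otherwise. -/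

import Mathlib

open Polynomial

/-- `A f z₀ = ∑_{k ≥ 0} |f⁽ᵏ⁾(0)| · (Im z₀)^k` for a complex polynomial `f`
(the sum is finite: only `k ≤ deg f` contribute). -/
noncomputable def polyNormA (f : Polynomial ℂ) (z₀ : ℂ) : ℝ :=
  ∑ k ∈ Finset.range (f.natDegree + 1),
    ‖(Polynomial.derivative^[k] f).eval 0‖ * z₀.im ^ k

/-!
Put `y = Im z₀` and rescale by the affine map `L w = conj z₀ + 2 i y w`, which sends `0 ↦ conj z₀`,
`1 ↦ z₀` and some `w₀` with `|w₀| ≤ 1` to `0`. For `g = f ∘ L` we have `g⁽ᵏ⁾ = (2iy)ᵏ f⁽ᵏ⁾ ∘ L`,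
so `A(f, z₀)` is bounded by the derivatives of `g` at `w₀`, hence by the coefficients of `g`,
while the hypotheses bound `n + 1` Hermite data of `g` (derivatives at `1` through those of `f`
at `z₀`, at `0` through those of `f̄` at `z₀`) by `2ⁿ (ε A + |a| + |a'|)`. Two-point Hermite
interpolation is unique, so on polynomials of degree `≤ n` these data control the coefficients.
Altogether `A ≤ M (ε A + |a| + |a'|)` with `M` depending only on `n, n₁`, and `ε = 1 / (2M)`
gives `A ≤ 2M (|a| + |a'|)`.
-/

namespace Polynomial

section HermiteData

variable {R : Type*} [CommSemiring R] (x y : R) (m m' : ℕ)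

noncomputable def hermiteData : R[X] →ₗ[R] Fin m ⊕ Fin m' → R :=
  LinearMap.pi <| Sum.elim (fun k => leval x ∘ₗ derivative ^ (k : ℕ))
    (fun k => leval y ∘ₗ derivative ^ (k : ℕ))

@[simp]
theorem hermiteData_inl (p : R[X]) (k : Fin m) :
    hermiteData x y m m' p (.inl k) = (derivative^[k] p).eval x := by
  simp [hermiteData, Module.End.pow_apply]

@[simp]
theorem hermiteData_inr (p : R[X]) (k : Fin m') :
    hermiteData x y m m' p (.inr k) = (derivative^[k] p).eval y := by
  simp [hermiteData, Module.End.pow_apply]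

end HermiteData

section HermiteUniqueness

variable {K : Type*} [Field K] [CharZero K]

theorem pow_X_sub_C_dvd_of_iterate_derivative_eval_eq_zero {p : K[X]} {x : K} {m : ℕ}
    (h : ∀ k < m, (derivative^[k] p).eval x = 0) : (X - C x) ^ m ∣ p := by
  rcases eq_or_ne p 0 with rfl | hp
  · exact dvd_zero _
  rw [← le_rootMultiplicity_iff hp]
  cases m with
  | zero => exact Nat.zero_le _
  | succ m =>
    exact (lt_rootMultiplicity_iff_isRoot_iterate_derivative hp).2 fun k hk => h k (by omega)

theorem eq_zero_of_hermiteData_eq_zero {x y : K} (hxy : x ≠ y) {m m' : ℕ} {p : K[X]}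
    (hp : p.degree < (m + m' : ℕ)) (h : hermiteData x y m m' p = 0) : p = 0 := by
  by_contra hp0
  have hx : (X - C x) ^ m ∣ p := pow_X_sub_C_dvd_of_iterate_derivative_eval_eq_zero
    fun k hk => by simpa using congr_fun h (.inl ⟨k, hk⟩)
  have hy : (X - C y) ^ m' ∣ p := pow_X_sub_C_dvd_of_iterate_derivative_eval_eq_zero
    fun k hk => by simpa using congr_fun h (.inr ⟨k, hk⟩)
  have hcop : IsCoprime ((X - C x) ^ m) ((X - C y) ^ m') :=
    (isCoprime_X_sub_C_of_isUnit_sub (sub_ne_zero.2 hxy).isUnit).pow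
  have hdeg := natDegree_le_of_dvd (hcop.mul_dvd hx hy) hp0
  rw [natDegree_mul (pow_ne_zero _ (X_sub_C_ne_zero x)) (pow_ne_zero _ (X_sub_C_ne_zero y)),
    natDegree_pow, natDegree_pow, natDegree_X_sub_C, natDegree_X_sub_C] at hdeg
  have := (natDegree_lt_iff_degree_lt hp0).2 hp
  omega

end HermiteUniqueness

section CoeffBounds

variable {𝕜 : Type*} [NormedField 𝕜] {p : 𝕜[X]} {n : ℕ} {M : ℝ}

theorem norm_coeff_derivative_le (hp : p.natDegree ≤ n) (hM : ∀ i, ‖p.coeff i‖ ≤ M) (i : ℕ) :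
    ‖(derivative p).coeff i‖ ≤ n * M := by
  have hM0 : 0 ≤ M := (norm_nonneg _).trans (hM 0)
  rw [coeff_derivative]
  rcases le_or_gt (i + 1) n with hi | hi
  · have hcast : ‖((i + 1 : ℕ) : 𝕜)‖ ≤ n :=
      ((Nat.norm_cast_le (i + 1)).trans_eq (by rw [norm_one, mul_one])).trans (by exact_mod_cast hi)
    calc ‖p.coeff (i + 1) * ((i : 𝕜) + 1)‖ = ‖p.coeff (i + 1)‖ * ‖((i + 1 : ℕ) : 𝕜)‖ := by
          rw [norm_mul, Nat.cast_succ]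
      _ ≤ M * n := mul_le_mul (hM _) hcast (norm_nonneg _) hM0
      _ = n * M := mul_comm _ _
  · rw [coeff_eq_zero_of_natDegree_lt (by omega), zero_mul, norm_zero]
    positivity

theorem norm_coeff_iterate_derivative_le (hp : p.natDegree ≤ n) (hM : ∀ i, ‖p.coeff i‖ ≤ M)
    (k i : ℕ) : ‖(derivative^[k] p).coeff i‖ ≤ n ^ k * M := by
  induction k generalizing i with
  | zero => simpa using hM i
  | succ k ih =>
    rw [Function.iterate_succ_apply', pow_succ', mul_assoc]
    exact norm_coeff_derivative_le ((natDegree_iterate_derivative p k).trans (by omega)) ih i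

theorem norm_eval_le_of_norm_coeff_le (hp : p.natDegree ≤ n) (hM : ∀ i, ‖p.coeff i‖ ≤ M)
    {w : 𝕜} (hw : ‖w‖ ≤ 1) : ‖p.eval w‖ ≤ (n + 1) * M := by
  rw [eval_eq_sum_range' (Nat.lt_succ_of_le hp)]
  calc ‖∑ i ∈ Finset.range (n + 1), p.coeff i * w ^ i‖
      ≤ ∑ i ∈ Finset.range (n + 1), ‖p.coeff i * w ^ i‖ := norm_sum_le _ _
    _ ≤ ∑ _i ∈ Finset.range (n + 1), M := Finset.sum_le_sum fun i _ => by
        rw [norm_mul, norm_pow]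
        exact (mul_le_of_le_one_right (norm_nonneg _) (pow_le_one₀ (norm_nonneg _) hw)).trans (hM i)
    _ = (n + 1) * M := by simp

theorem norm_eval_iterate_derivative_le (hp : p.natDegree ≤ n) (hM : ∀ i, ‖p.coeff i‖ ≤ M)
    (k : ℕ) {w : 𝕜} (hw : ‖w‖ ≤ 1) : ‖(derivative^[k] p).eval w‖ ≤ (n + 1) * (n ^ k * M) :=
  norm_eval_le_of_norm_coeff_le ((natDegree_iterate_derivative p k).trans (by omega))
    (norm_coeff_iterate_derivative_le hp hM k) hw

end CoeffBounds

section Stability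

variable {𝕜 : Type*} [NontriviallyNormedField 𝕜] [CompleteSpace 𝕜] [CharZero 𝕜]

/-- On the finite-dimensional space of polynomials of degree `< m + m'` the Hermite data map is
injective, hence antilipschitz. -/
theorem exists_norm_coeff_le_mul_norm_hermiteData {x y : 𝕜} (hxy : x ≠ y) (m m' : ℕ) :
    ∃ C > 0, ∀ p : 𝕜[X], p.natDegree < m + m' →
      ∀ i, ‖p.coeff i‖ ≤ C * ‖hermiteData x y m m' p‖ := by
  set T := hermiteData x y m m' ∘ₗ (degreeLT 𝕜 (m + m')).subtype ∘ₗ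
    (degreeLTEquiv 𝕜 (m + m')).symm.toLinearMap
  have hT : Function.Injective T := by
    rw [← LinearMap.ker_eq_bot, LinearMap.ker_eq_bot']
    intro c hc
    have hq := ((degreeLTEquiv 𝕜 (m + m')).symm c).2
    have := eq_zero_of_hermiteData_eq_zero hxy (mem_degreeLT.1 hq) hc
    simpa using this
  obtain ⟨C, hC, hCT⟩ := T.injective_iff_antilipschitz.1 hT
  refine ⟨C, hC, fun p hp i => ?_⟩
  have hmem : p ∈ degreeLT 𝕜 (m + m') :=
    mem_degreeLT.2 (degree_le_natDegree.trans_lt (by exact_mod_cast hp))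
  set c := degreeLTEquiv 𝕜 (m + m') ⟨p, hmem⟩
  have hTc : T c = hermiteData x y m m' p := by simp [T, c]
  rcases lt_or_ge i (m + m') with hi | hi
  · calc ‖p.coeff i‖ = ‖c ⟨i, hi⟩‖ := rfl
      _ ≤ ‖c‖ := norm_le_pi_norm c _
      _ ≤ C * ‖hermiteData x y m m' p‖ := hTc ▸ ZeroHomClass.bound_of_antilipschitz T hCT c
  · rw [coeff_eq_zero_of_natDegree_lt (by omega), norm_zero]
    positivity

end Stability

theorem iterate_derivative_comp_C_mul_X_add_C {R : Type*} [CommSemiring R] (p : R[X]) (a b : R)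
    (k : ℕ) : derivative^[k] (p.comp (C a * X + C b)) =
      C (a ^ k) * (derivative^[k] p).comp (C a * X + C b) := by
  have hL : derivative (C a * X + C b) = C a := by simp
  induction k with
  | zero => simp
  | succ k ih =>
    rw [Function.iterate_succ_apply', ih, Function.iterate_succ_apply', derivative_C_mul,
      derivative_comp, hL, pow_succ, C_mul]
    ring

theorem natDegree_comp_C_mul_X_add_C_le {R : Type*} [Semiring R] (p : R[X]) (a b : R) :
    (p.comp (C a * X + C b)).natDegree ≤ p.natDegree :=
  natDegree_comp_le.trans ((Nat.mul_le_mul_left _ natDegree_linear_le).trans_eq (mul_one _))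

theorem eval_iterate_derivative_comp_C_mul_X_add_C {R : Type*} [CommSemiring R] (p : R[X])
    (a b w : R) (k : ℕ) : (derivative^[k] (p.comp (C a * X + C b))).eval w =
      a ^ k * (derivative^[k] p).eval (a * w + b) := by
  rw [iterate_derivative_comp_C_mul_X_add_C, eval_mul, eval_C, eval_comp]
  simp

theorem eval_map_conj (p : ℂ[X]) (z : ℂ) :
    (p.map (starRingEnd ℂ)).eval z = starRingEnd ℂ (p.eval (starRingEnd ℂ z)) := by
  rw [eval_map, ← eval₂_hom, Complex.conj_conj]

end Polynomial

theorem two_mul_pow_mul_norm_le {E : Type*} [SeminormedAddCommGroup E] {n k : ℕ} (hk : k ≤ n)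
    {y t : ℝ} (hy : 0 < y) (ht : 0 ≤ t) {v w : E}
    (h : ‖v - if k = 0 then w else 0‖ ≤ t / y ^ k) : (2 * y) ^ k * ‖v‖ ≤ 2 ^ n * (t + ‖w‖) := by
  have h2n : (1 : ℝ) ≤ 2 ^ n := one_le_pow₀ one_le_two
  rcases eq_or_ne k 0 with rfl | hk0
  · simp only [if_true, pow_zero, div_one, one_mul] at h ⊢
    calc ‖v‖ ≤ ‖v - w‖ + ‖w‖ := norm_le_norm_sub_add v w
      _ ≤ t + ‖w‖ := by linarith
      _ ≤ 2 ^ n * (t + ‖w‖) := le_mul_of_one_le_left (by positivity) h2n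
  · simp only [if_neg hk0, sub_zero] at h
    calc (2 * y) ^ k * ‖v‖ ≤ (2 * y) ^ k * (t / y ^ k) := by gcongr
      _ = 2 ^ k * t := by rw [mul_pow]; field_simp
      _ ≤ 2 ^ n * (t + ‖w‖) := by
        gcongr
        exacts [one_le_two, le_add_of_nonneg_right (norm_nonneg w)]

open ComplexConjugate

theorem polyNormA_nonneg (f : ℂ[X]) {z₀ : ℂ} (hy : 0 ≤ z₀.im) : 0 ≤ polyNormA f z₀ :=
  Finset.sum_nonneg fun _ _ => by positivity

section Rescaling

variable {f : ℂ[X]} {z₀ : ℂ}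

theorem polyNormA_le_of_norm_coeff_comp_le {n : ℕ} (hf : f.natDegree ≤ n)
    (hz₀ : |z₀.re| ≤ z₀.im) (hy : 0 < z₀.im) {M : ℝ}
    (hM : ∀ i, ‖(f.comp (C (z₀ - conj z₀) * X + C (conj z₀))).coeff i‖ ≤ M) :
    polyNormA f z₀ ≤ (n + 1) ^ (n + 2) * M := by
  set u := z₀ - conj z₀
  have hu : ‖u‖ = 2 * z₀.im := by simp [u, Complex.sub_conj, abs_of_pos hy]
  have hu0 : u ≠ 0 := norm_ne_zero_iff.1 (by rw [hu]; positivity)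
  have hM0 : 0 ≤ M := (norm_nonneg _).trans (hM 0)
  have hg := (natDegree_comp_C_mul_X_add_C_le f u (conj z₀)).trans hf
  set w₀ := -conj z₀ / u
  have hw₀ : ‖w₀‖ ≤ 1 := by
    rw [norm_div, norm_neg, Complex.norm_conj, hu]
    refine div_le_one_of_le₀ ((Complex.norm_le_abs_re_add_abs_im z₀).trans ?_) (by positivity)
    rw [abs_of_pos hy]; linarith
  have hterm : ∀ k ≤ n, ‖(derivative^[k] f).eval 0‖ * z₀.im ^ k ≤ (n + 1) ^ (n + 1) * M := by
    intro k hk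
    have hval : (derivative^[k] (f.comp (C u * X + C (conj z₀)))).eval w₀ =
        u ^ k * (derivative^[k] f).eval 0 := by
      rw [eval_iterate_derivative_comp_C_mul_X_add_C, mul_div_cancel₀ _ hu0, neg_add_cancel]
    calc ‖(derivative^[k] f).eval 0‖ * z₀.im ^ k
        ≤ (2 * z₀.im) ^ k * ‖(derivative^[k] f).eval 0‖ := by
          rw [mul_comm]; gcongr; linarith
      _ = ‖(derivative^[k] (f.comp (C u * X + C (conj z₀)))).eval w₀‖ := by
          rw [hval, norm_mul, norm_pow, hu]
      _ ≤ (n + 1) * (n ^ k * M) := norm_eval_iterate_derivative_le hg hM k hw₀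
      _ ≤ (n + 1) * ((n + 1) ^ n * M) := by
          gcongr
          exact (pow_le_pow_left₀ (by positivity) (by linarith) k).trans
            (pow_le_pow_right₀ (by linarith) hk)
      _ = (n + 1) ^ (n + 1) * M := by ring
  calc polyNormA f z₀ ≤ ∑ _k ∈ Finset.range (f.natDegree + 1), (n + 1) ^ (n + 1) * M :=
        Finset.sum_le_sum fun k hk => hterm k ((Nat.lt_succ_iff.1 (Finset.mem_range.1 hk)).trans hf)
    _ = (f.natDegree + 1) * ((n + 1) ^ (n + 1) * M) := by simp
    _ ≤ (n + 1) * ((n + 1) ^ (n + 1) * M) := by gcongr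
    _ = (n + 1) ^ (n + 2) * M := by ring

theorem norm_hermiteData_comp_le (hy : 0 < z₀.im) {n m m' : ℕ} (hm : m ≤ n + 1)
    (hm' : m' ≤ n + 1) {t : ℝ} (ht : 0 ≤ t) {a a' : ℂ}
    (h₁ : ∀ k < m', ‖(derivative^[k] f).eval z₀ - if k = 0 then a else 0‖ ≤ t / z₀.im ^ k)
    (h₂ : ∀ k < m, ‖(derivative^[k] (f.map (starRingEnd ℂ))).eval z₀ - if k = 0 then a' else 0‖
      ≤ t / z₀.im ^ k) :
    ‖hermiteData 0 1 m m' (f.comp (C (z₀ - conj z₀) * X + C (conj z₀)))‖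
      ≤ 2 ^ n * (t + ‖a‖ + ‖a'‖) := by
  have hu : ‖z₀ - conj z₀‖ = 2 * z₀.im := by simp [Complex.sub_conj, abs_of_pos hy]
  refine (pi_norm_le_iff_of_nonneg (by positivity)).2 ?_
  rintro (⟨k, hk⟩ | ⟨k, hk⟩)
  · have hconj : ‖(derivative^[k] f).eval (conj z₀)‖ =
        ‖(derivative^[k] (f.map (starRingEnd ℂ))).eval z₀‖ := by
      rw [iterate_derivative_map, eval_map_conj, Complex.norm_conj]
    calc ‖hermiteData 0 1 m m' (f.comp (C (z₀ - conj z₀) * X + C (conj z₀))) (.inl ⟨k, hk⟩)‖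
        = (2 * z₀.im) ^ k * ‖(derivative^[k] (f.map (starRingEnd ℂ))).eval z₀‖ := by
          rw [hermiteData_inl, eval_iterate_derivative_comp_C_mul_X_add_C, norm_mul, norm_pow, hu,
            mul_zero, zero_add, hconj]
      _ ≤ 2 ^ n * (t + ‖a'‖) := two_mul_pow_mul_norm_le (by omega) hy ht (h₂ k hk)
      _ ≤ 2 ^ n * (t + ‖a‖ + ‖a'‖) := by gcongr; linarith [norm_nonneg a]
  · calc ‖hermiteData 0 1 m m' (f.comp (C (z₀ - conj z₀) * X + C (conj z₀))) (.inr ⟨k, hk⟩)‖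
        = (2 * z₀.im) ^ k * ‖(derivative^[k] f).eval z₀‖ := by
          rw [hermiteData_inr, eval_iterate_derivative_comp_C_mul_X_add_C, norm_mul, norm_pow, hu,
            mul_one, sub_add_cancel]
      _ ≤ 2 ^ n * (t + ‖a‖) := two_mul_pow_mul_norm_le (by omega) hy ht (h₁ k hk)
      _ ≤ 2 ^ n * (t + ‖a‖ + ‖a'‖) := by gcongr 2 ^ n * ?_; linarith [norm_nonneg a']

end Rescaling

/-- Uniform form of Lemma 2.5: for `n < n₁ + n₂` there exist `ε > 0`, `r > 1`,
`C > 0` depending only on `n, n₁, n₂` such that for all `a, a' ∈ ℂ`, every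
polynomial `f` of degree `≤ n` and every `z₀` with `0 ≤ Re z₀ < 1`,
`Im z₀ > r`, the conditions
`|f⁽ᵏ⁾(z₀) − δ_{k,0} a| ≤ ε A(f,z₀)/y₀^k` for `0 ≤ k < n₁` and
`|f̄⁽ᵏ⁾(z₀) − δ_{k,0} a'| ≤ ε A(f,z₀)/y₀^k` for `0 ≤ k < n₂`
imply `A(f,z₀) ≤ C (|a| + |a'|)`. -/
theorem lemma_2_5_uniform (n n₁ n₂ : ℕ) (hn : n < n₁ + n₂) :
    ∃ ε r C : ℝ, 0 < ε ∧ 1 < r ∧ 0 < C ∧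
      ∀ (a a' : ℂ) (f : Polynomial ℂ) (z₀ : ℂ), f.natDegree ≤ n →
        0 ≤ z₀.re → z₀.re < 1 → r < z₀.im →
        (∀ k < n₁,
          ‖(Polynomial.derivative^[k] f).eval z₀ - if k = 0 then a else 0‖
            ≤ ε * polyNormA f z₀ / z₀.im ^ k) →
        (∀ k < n₂,
          ‖(Polynomial.derivative^[k] (f.map (starRingEnd ℂ))).eval z₀ -
                if k = 0 then a' else 0‖
            ≤ ε * polyNormA f z₀ / z₀.im ^ k) →
        polyNormA f z₀ ≤ C * (‖a‖ + ‖a'‖) := by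
  -- Hermite data of `g = f ∘ L`: `n + 1 - m ≤ n₂` derivatives at `0 = L⁻¹ (conj z₀)` and
  -- `m ≤ n₁` at `1 = L⁻¹ z₀`.
  set m := min n₁ (n + 1)
  obtain ⟨K, hK, hcoeff⟩ := exists_norm_coeff_le_mul_norm_hermiteData (zero_ne_one' ℂ) (n + 1 - m) m
  set M : ℝ := (n + 1) ^ (n + 2) * K * 2 ^ n
  have hM : 0 < M := by positivity
  refine ⟨1 / (2 * M), 2, 2 * M, by positivity, one_lt_two, by positivity, ?_⟩
  intro a a' f z₀ hf hre₀ hre₁ him h₁ h₂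
  have hy : 0 < z₀.im := by linarith
  set A := polyNormA f z₀
  set g := f.comp (C (z₀ - conj z₀) * X + C (conj z₀))
  have hdata : ‖hermiteData 0 1 (n + 1 - m) m g‖ ≤ 2 ^ n * (1 / (2 * M) * A + ‖a‖ + ‖a'‖) :=
    norm_hermiteData_comp_le hy (by omega) (by omega)
      (mul_nonneg (by positivity) (polyNormA_nonneg f hy.le)) (fun k hk => h₁ k (by omega))
      (fun k hk => h₂ k (by omega))
  have hA : A ≤ (n + 1) ^ (n + 2) * (K * ‖hermiteData 0 1 (n + 1 - m) m g‖) :=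
    polyNormA_le_of_norm_coeff_comp_le hf (by rw [abs_of_nonneg hre₀]; linarith) hy
      (hcoeff g (by have : g.natDegree ≤ _ := natDegree_comp_C_mul_X_add_C_le f _ _; omega))
  have hhalf : A ≤ A / 2 + M * (‖a‖ + ‖a'‖) := calc
    A ≤ (n + 1) ^ (n + 2) * K * ‖hermiteData 0 1 (n + 1 - m) m g‖ := by rwa [← mul_assoc] at hA
    _ ≤ (n + 1) ^ (n + 2) * K * (2 ^ n * (1 / (2 * M) * A + ‖a‖ + ‖a'‖)) := by gcongr
    _ = A / 2 + M * (‖a‖ + ‖a'‖) := by field_simp; ring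
  linarith
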